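/- Let Ā ∈ ℝ^{p×p} be symmetric with eigenvalues ordered by absolute value |λ₁| ≥ ⋯ ≥ |λ_p|, let P ∈ ℝ^{p×m} have as columns orthonormal eigenvectors of Ā corresponding to λ₁,…,λ_m, λ_m ≠ 0, and set γ = |λ_{m+1}/λ_m|. Let Q_{t-1} ∈ ℝ^{p×m} satisfy Q_{t-1}ᵀQ_{t-1} = I_m and let Q_t R_t = Ā Q_{t-1} be a QR factorization with Q_tᵀQ_t = I_m. Assume ‖PᵀQ_t‖_F² = c‖PᵀQ_t‖₂² for some c ∈ [1,m]. Then ‖sinΘ(P,Q_t)‖_F² ≤ (γ²‖sinΘ(P,Q_{t-1})‖_F² + ((m−c)/m)‖PᵀQ_{t-1}‖_F²) / (1 − (1−γ²)‖sinΘ(P,Q_{t-1})‖₂²), provided the denominator is positive. -/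

import Mathlib

open Matrix

noncomputable def specNorm {p m : ℕ} (A : Matrix (Fin p) (Fin m) ℝ) : ℝ :=
  ‖LinearMap.toContinuousLinearMap (Matrix.toEuclideanLin A)‖

noncomputable def frobNorm {p m : ℕ} (A : Matrix (Fin p) (Fin m) ℝ) : ℝ :=
  Real.sqrt (∑ i, ∑ j, (A i j) ^ 2)

noncomputable def enorm {p : ℕ} (v : Fin p → ℝ) : ℝ :=
  Real.sqrt (∑ i, (v i) ^ 2)

noncomputable def l0norm {p : ℕ} (v : Fin p → ℝ) : ℕ :=
  (Finset.univ.filter fun i => v i ≠ 0).card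

noncomputable def truncate {p : ℕ} (y : Fin p → ℝ) (F : Finset (Fin p)) : Fin p → ℝ :=
  fun i => if i ∈ F then y i else 0

noncomputable def rhoEK {p m : ℕ} (E : Matrix (Fin p) (Fin p) ℝ) (K : Fin m → ℕ) : ℝ :=
  sSup {c | ∃ Q : Matrix (Fin p) (Fin m) ℝ,
    Qᵀ * Q = 1 ∧ (∀ i, l0norm (fun r => Q r i) ≤ K i) ∧ c = specNorm (E * Q)}

noncomputable def sinTheta2 {p m : ℕ} (P Q : Matrix (Fin p) (Fin m) ℝ) : ℝ :=
  specNorm ((1 - P * Pᵀ) * Q)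

noncomputable def sinThetaF {p m : ℕ} (P Q : Matrix (Fin p) (Fin m) ℝ) : ℝ :=
  frobNorm ((1 - P * Pᵀ) * Q)

section Aux
set_option linter.unusedSectionVars false
variable {n : Type*} [Fintype n] [DecidableEq n]

lemma psd_trace_nonneg {A : Matrix n n ℝ} (hA : A.PosSemidef) : 0 ≤ A.trace := by
  rw [Matrix.trace]
  refine Finset.sum_nonneg fun i _ => ?_
  simpa using hA.dotProduct_mulVec_nonneg (Pi.single i 1)

lemma psd_trace_mul_nonneg {A B : Matrix n n ℝ} (hA : A.PosSemidef) (hB : B.PosSemidef) :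
    0 ≤ (A * B).trace := by
  obtain ⟨C, rfl⟩ : ∃ C : Matrix n n ℝ, A = Cᵀ * C := by
    open scoped MatrixOrder in
    obtain ⟨C, hC⟩ := CStarAlgebra.nonneg_iff_eq_star_mul_self.mp hA.nonneg
    exact ⟨C, by simpa [Matrix.star_eq_conjTranspose] using hC⟩
  rw [Matrix.mul_assoc, Matrix.trace_mul_comm]
  exact psd_trace_nonneg (hB.mul_mul_conjTranspose_same C)

lemma trace_mul_mono {T X Y : Matrix n n ℝ} (hT : T.PosSemidef)
    (h : (Y - X).PosSemidef) : (T * X).trace ≤ (T * Y).trace := by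
  have := psd_trace_mul_nonneg hT h
  rw [Matrix.mul_sub, Matrix.trace_sub] at this
  linarith

lemma posdef_of_psd_diff {A B : Matrix n n ℝ} (hA : A.PosDef) (h : (B - A).PosSemidef) :
    B.PosDef := by
  refine Matrix.PosDef.of_dotProduct_mulVec_pos ?_ fun x hx => ?_
  · have h1 := h.1
    have h2 := hA.1
    have : (B - A)ᴴ = B - A := h1
    rw [Matrix.conjTranspose_sub, h2] at this
    have := congrArg (· + A) this
    have h3 : Bᵀ = B := by simpa using this
    exact h3
  · have h1 := h.dotProduct_mulVec_nonneg x
    have h2 := hA.dotProduct_mulVec_pos hx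
    rw [Matrix.sub_mulVec, dotProduct_sub] at h1
    simp only [star_trivial] at *
    linarith

lemma psd_inv_antitone {A B : Matrix n n ℝ} (hA : A.PosDef) (hB : B.PosDef)
    (h : (B - A).PosSemidef) : (A⁻¹ - B⁻¹).PosSemidef := by
  have hAd : IsUnit A.det := hA.det_pos.ne'.isUnit
  have hBd : IsUnit B.det := hB.det_pos.ne'.isUnit
  have hAH : Aᵀ = A := by simpa using hA.1.eq
  have hBH : Bᵀ = B := by simpa using hB.1.eq
  have hAiH : (A⁻¹)ᵀ = A⁻¹ := by rw [Matrix.transpose_nonsing_inv, hAH]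
  have hBiH : (B⁻¹)ᵀ = B⁻¹ := by rw [Matrix.transpose_nonsing_inv, hBH]
  refine Matrix.PosSemidef.of_dotProduct_mulVec_nonneg ?_ ?_
  · show (A⁻¹ - B⁻¹)ᴴ = _
    have : (A⁻¹ - B⁻¹)ᴴ = (A⁻¹ - B⁻¹)ᵀ := Matrix.conjTranspose_eq_transpose_of_trivial _
    rw [this, Matrix.transpose_sub, hAiH, hBiH]
  · intro x
    show 0 ≤ x ⬝ᵥ ((A⁻¹ - B⁻¹) *ᵥ x)
    set y : n → ℝ := B⁻¹ *ᵥ x with hy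
    set z : n → ℝ := A⁻¹ *ᵥ x with hz
    have hBy : B *ᵥ y = x := by
      rw [hy, Matrix.mulVec_mulVec, Matrix.mul_nonsing_inv _ hBd, Matrix.one_mulVec]
    have hAz : A *ᵥ z = x := by
      rw [hz, Matrix.mulVec_mulVec, Matrix.mul_nonsing_inv _ hAd, Matrix.one_mulVec]
    have k1 : 0 ≤ (y - z) ⬝ᵥ (A *ᵥ (y - z)) := hA.posSemidef.dotProduct_mulVec_nonneg (y - z)
    have k2 : 0 ≤ y ⬝ᵥ ((B - A) *ᵥ y) := h.dotProduct_mulVec_nonneg y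
    have hsym : z ⬝ᵥ (A *ᵥ y) = y ⬝ᵥ (A *ᵥ z) := by
      rw [dotProduct_mulVec, ← Matrix.mulVec_transpose, hAH, dotProduct_comm]
    have e1 : (y - z) ⬝ᵥ (A *ᵥ (y - z)) =
        y ⬝ᵥ (A *ᵥ y) - 2 * (y ⬝ᵥ x) + x ⬝ᵥ z := by
      have hyAz : y ⬝ᵥ (A *ᵥ z) = y ⬝ᵥ x := by rw [hAz]
      have hzAz : z ⬝ᵥ (A *ᵥ z) = z ⬝ᵥ x := by rw [hAz]
      have hzx : z ⬝ᵥ x = x ⬝ᵥ z := dotProduct_comm _ _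
      rw [Matrix.mulVec_sub, dotProduct_sub, sub_dotProduct, sub_dotProduct,
        hsym, hyAz, hzAz, hzx]
      ring
    have e2 : y ⬝ᵥ ((B - A) *ᵥ y) = y ⬝ᵥ x - y ⬝ᵥ (A *ᵥ y) := by
      rw [Matrix.sub_mulVec, dotProduct_sub, hBy]
    have e3 : x ⬝ᵥ ((A⁻¹ - B⁻¹) *ᵥ x) = x ⬝ᵥ z - x ⬝ᵥ y := by
      rw [Matrix.sub_mulVec, dotProduct_sub, ← hy, ← hz]
    have hxy : x ⬝ᵥ y = y ⬝ᵥ x := dotProduct_comm _ _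
    rw [e3, hxy]
    nlinarith [k1, k2, e1, e2]

lemma psd_smul' {c : ℝ} {A : Matrix n n ℝ} (hc : 0 ≤ c) (hA : A.PosSemidef) :
    (c • A).PosSemidef := by
  refine Matrix.PosSemidef.of_dotProduct_mulVec_nonneg ?_ ?_
  · show (c • A)ᴴ = c • A
    rw [Matrix.conjTranspose_smul, hA.1]
    simp
  · intro x
    have := hA.dotProduct_mulVec_nonneg x
    rw [Matrix.smul_mulVec, dotProduct_smul]
    simpa using mul_nonneg hc (by simpa using this)

lemma posdef_smul_one {c : ℝ} (hc : 0 < c) : ((c • (1 : Matrix n n ℝ))).PosDef := by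
  refine Matrix.PosDef.of_dotProduct_mulVec_pos ?_ ?_
  · show (c • (1:Matrix n n ℝ))ᴴ = c • 1
    rw [Matrix.conjTranspose_smul, Matrix.conjTranspose_one]; simp
  · intro x hx
    rw [Matrix.smul_mulVec, Matrix.one_mulVec, dotProduct_smul]
    have : (0:ℝ) < x ⬝ᵥ x := by
      simpa using dotProduct_self_star_pos_iff (v := x).mpr hx
    simpa using mul_pos hc this

lemma smul_one_inv {c : ℝ} (hc : c ≠ 0) :
    ((c • (1 : Matrix n n ℝ)))⁻¹ = c⁻¹ • 1 := by
  apply Matrix.inv_eq_left_inv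
  rw [Matrix.smul_mul, Matrix.mul_smul, one_mul, smul_smul, inv_mul_cancel₀ hc, one_smul]

end Aux

lemma quad_self {p m : ℕ} (C : Matrix (Fin p) (Fin m) ℝ) (x : Fin m → ℝ) :
    x ⬝ᵥ ((Cᵀ * C) *ᵥ x) = (C *ᵥ x) ⬝ᵥ (C *ᵥ x) := by
  rw [← Matrix.mulVec_mulVec, dotProduct_mulVec, ← Matrix.mulVec_transpose,
    Matrix.transpose_transpose, dotProduct_comm]

lemma quad_diag {p m : ℕ} (d : Fin p → ℝ) (G : Matrix (Fin p) (Fin m) ℝ) (x : Fin m → ℝ) :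
    x ⬝ᵥ ((Gᵀ * Matrix.diagonal d * G) *ᵥ x) = ∑ i, d i * ((G *ᵥ x) i)^2 := by
  rw [Matrix.mul_assoc, ← Matrix.mulVec_mulVec, dotProduct_mulVec, ← Matrix.mulVec_transpose,
    Matrix.transpose_transpose, ← Matrix.mulVec_mulVec]
  rw [dotProduct_comm]
  simp [dotProduct, Matrix.mulVec_diagonal, sq]
  congr 1; ext i; ring

lemma psd_GdG {p m : ℕ} {d : Fin p → ℝ} (hd : ∀ i, 0 ≤ d i) (G : Matrix (Fin p) (Fin m) ℝ) :
    (Gᵀ * Matrix.diagonal d * G).PosSemidef := by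
  have h := (Matrix.PosSemidef.diagonal (d := d) hd).conjTranspose_mul_mul_same G
  simpa [Matrix.conjTranspose_eq_transpose_of_trivial] using h

lemma frobNorm_sq {p m : ℕ} (A : Matrix (Fin p) (Fin m) ℝ) :
    frobNorm A ^ 2 = (Aᵀ * A).trace := by
  rw [frobNorm, Real.sq_sqrt (by positivity)]
  rw [Matrix.trace]
  rw [Finset.sum_comm]
  congr 1; ext j
  simp [Matrix.mul_apply, Matrix.diag, sq]

lemma specNorm_quad {p m : ℕ} (C : Matrix (Fin p) (Fin m) ℝ) (x : Fin m → ℝ) :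
    x ⬝ᵥ ((Cᵀ * C) *ᵥ x) ≤ specNorm C ^ 2 * (x ⬝ᵥ x) := by
  rw [quad_self]
  set f := LinearMap.toContinuousLinearMap (Matrix.toEuclideanLin C)
  have hx : ‖f ((WithLp.equiv 2 (Fin m → ℝ)).symm x)‖ ≤ ‖f‖ * ‖(WithLp.equiv 2 (Fin m → ℝ)).symm x‖ :=
    f.le_opNorm _
  have hfx : f ((WithLp.equiv 2 (Fin m → ℝ)).symm x) = (WithLp.equiv 2 (Fin p → ℝ)).symm (C *ᵥ x) := by
    simp [f, Matrix.toEuclideanLin, Matrix.toLin'_apply]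
  have h1 : ‖(WithLp.equiv 2 (Fin p → ℝ)).symm (C *ᵥ x)‖ ^ 2 = (C *ᵥ x) ⬝ᵥ (C *ᵥ x) := by
    rw [EuclideanSpace.norm_eq]
    rw [Real.sq_sqrt (by positivity)]
    simp [dotProduct, sq]
  have h2 : ‖(WithLp.equiv 2 (Fin m → ℝ)).symm x‖ ^ 2 = x ⬝ᵥ x := by
    rw [EuclideanSpace.norm_eq]
    rw [Real.sq_sqrt (by positivity)]
    simp [dotProduct, sq]
  have := mul_self_le_mul_self (norm_nonneg _) hx
  rw [hfx] at this
  calc (C *ᵥ x) ⬝ᵥ (C *ᵥ x) = ‖(WithLp.equiv 2 (Fin p → ℝ)).symm (C *ᵥ x)‖ ^ 2 := h1.symm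
    _ ≤ (‖f‖ * ‖(WithLp.equiv 2 (Fin m → ℝ)).symm x‖) ^ 2 := by
        rw [sq, sq]; exact this
    _ = specNorm C ^ 2 * (x ⬝ᵥ x) := by rw [mul_pow, h2]; rfl

lemma pp_eq {p m : ℕ} (hmp : m ≤ p) (V : Matrix (Fin p) (Fin p) ℝ) :
    (V.submatrix id (Fin.castLE hmp)) * (V.submatrix id (Fin.castLE hmp))ᵀ
      = V * Matrix.diagonal (fun i : Fin p => if (i:ℕ) < m then (1:ℝ) else 0) * Vᵀ := by
  ext i j
  have hR : (V * Matrix.diagonal (fun i : Fin p => if (i:ℕ) < m then (1:ℝ) else 0) * Vᵀ) i j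
      = ∑ k : Fin p, V i k * (if (k:ℕ) < m then V j k else 0) := by
    rw [Matrix.mul_assoc, Matrix.mul_apply]
    refine Finset.sum_congr rfl fun k _ => ?_
    rw [Matrix.mul_apply]
    by_cases h : (k:ℕ) < m
    · rw [Finset.sum_eq_single k]
      · simp [Matrix.diagonal, h]
      · intro b _ hb
        rw [Matrix.diagonal_apply_ne' _ hb, zero_mul]
      · simp
    · rw [Finset.sum_eq_single k]
      · simp [Matrix.diagonal, h]
      · intro b _ hb
        rw [Matrix.diagonal_apply_ne' _ hb, zero_mul]
      · simp
  have hL : ((V.submatrix id (Fin.castLE hmp)) * (V.submatrix id (Fin.castLE hmp))ᵀ) i j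
      = ∑ k : Fin m, V i (Fin.castLE hmp k) * V j (Fin.castLE hmp k) := by
    simp [Matrix.mul_apply]
  rw [hL, hR]
  have hvan : ∀ k ∈ (Finset.univ : Finset (Fin p)),
      k ∉ (Finset.univ : Finset (Fin m)).map ⟨Fin.castLE hmp, Fin.castLE_injective hmp⟩ →
      V i k * (if (k:ℕ) < m then V j k else 0) = 0 := by
    intro k _ hk
    have : ¬ ((k:ℕ) < m) := by
      intro hlt
      exact hk (Finset.mem_map.mpr ⟨⟨(k:ℕ), hlt⟩, Finset.mem_univ _, by ext; simp⟩)
    simp [this]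
  rw [← Finset.sum_subset (Finset.subset_univ _) hvan, Finset.sum_map]
  refine Finset.sum_congr rfl fun k _ => ?_
  simp [Fin.castLE]

set_option maxHeartbeats 1000000 in
/-- one-step sin-theta bound for the standard orthogonal iteration. -/
theorem orthogonal_iteration_sinTheta_bound
    {p m : ℕ} (hm1 : 1 ≤ m) (hmp : m < p)
    (Abar : Matrix (Fin p) (Fin p) ℝ) (hAsym : Abar.IsSymm)
    (lam : Fin p → ℝ)
    (hord : ∀ i j : Fin p, i ≤ j → |lam j| ≤ |lam i|)
    (V : Matrix (Fin p) (Fin p) ℝ) (hV : Vᵀ * V = 1)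
    (hAV : Abar * V = V * Matrix.diagonal lam)
    (P : Matrix (Fin p) (Fin m) ℝ)
    (hP : P = V.submatrix id (Fin.castLE hmp.le))
    (hlm : lam ⟨m - 1, by omega⟩ ≠ 0)
    (γ : ℝ) (hγ : γ = |lam ⟨m, hmp⟩ / lam ⟨m - 1, by omega⟩|)
    (Qprev Qt : Matrix (Fin p) (Fin m) ℝ) (Rt : Matrix (Fin m) (Fin m) ℝ)
    (hQprev : Qprevᵀ * Qprev = 1)
    (hQt : Qtᵀ * Qt = 1)
    (hRtri : Rt.BlockTriangular id) (hRinv : IsUnit Rt.det)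
    (hQR : Qt * Rt = Abar * Qprev)
    (c : ℝ) (hc1 : 1 ≤ c) (hcm : c ≤ m)
    (hc : frobNorm (Pᵀ * Qt) ^ 2 = c * specNorm (Pᵀ * Qt) ^ 2)
    (hden : 0 < 1 - (1 - γ ^ 2) * sinTheta2 P Qprev ^ 2) :
    (m : ℝ) - frobNorm (Pᵀ * Qt) ^ 2 ≤
      (γ ^ 2 * ((m : ℝ) - frobNorm (Pᵀ * Qprev) ^ 2)
          + (((m : ℝ) - c) / m) * frobNorm (Pᵀ * Qprev) ^ 2) /
        (1 - (1 - γ ^ 2) * sinTheta2 P Qprev ^ 2) := by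
  classical
  -- basic orthogonality facts
  have hVVt : V * Vᵀ = 1 := mul_eq_one_comm.mp hV
  have hB : Abar = V * Matrix.diagonal lam * Vᵀ := by
    calc Abar = Abar * (V * Vᵀ) := by rw [hVVt, Matrix.mul_one]
    _ = (Abar * V) * Vᵀ := by rw [Matrix.mul_assoc]
    _ = V * Matrix.diagonal lam * Vᵀ := by rw [hAV]
  set e : Fin p → ℝ := fun i => if (i:ℕ) < m then 1 else 0 with he
  have hPi : P * Pᵀ = V * Matrix.diagonal e * Vᵀ := by rw [hP]; exact pp_eq hmp.le V
  have hdd : ∀ d d' : Fin p → ℝ, (V * Matrix.diagonal d * Vᵀ) * (V * Matrix.diagonal d' * Vᵀ)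
      = V * Matrix.diagonal (fun i => d i * d' i) * Vᵀ := by
    intro d d'
    calc (V * Matrix.diagonal d * Vᵀ) * (V * Matrix.diagonal d' * Vᵀ)
        = V * Matrix.diagonal d * (Vᵀ * V) * Matrix.diagonal d' * Vᵀ := by
          simp only [Matrix.mul_assoc]
      _ = V * (Matrix.diagonal d * Matrix.diagonal d') * Vᵀ := by
          rw [hV]; simp only [Matrix.mul_assoc, Matrix.one_mul]
      _ = V * Matrix.diagonal (fun i => d i * d' i) * Vᵀ := by
          rw [Matrix.diagonal_mul_diagonal]
  set G : Matrix (Fin p) (Fin m) ℝ := Vᵀ * Qprev with hG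
  set W : (Fin p → ℝ) → Matrix (Fin m) (Fin m) ℝ :=
    fun d => Gᵀ * Matrix.diagonal d * G with hWdef
  have hWQ : ∀ d, Qprevᵀ * (V * Matrix.diagonal d * Vᵀ) * Qprev = W d := by
    intro d
    rw [hWdef, hG, Matrix.transpose_mul, Matrix.transpose_transpose]
    simp only [Matrix.mul_assoc]
  have hGtG : Gᵀ * G = 1 := by
    rw [hG, Matrix.transpose_mul, Matrix.transpose_transpose]
    calc Qprevᵀ * V * (Vᵀ * Qprev) = Qprevᵀ * (V * Vᵀ) * Qprev := by
          simp only [Matrix.mul_assoc]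
      _ = 1 := by rw [hVVt, Matrix.mul_one, hQprev]
  have hW1 : W (fun _ => 1) = 1 := by
    rw [hWdef]
    show Gᵀ * Matrix.diagonal (fun _ => (1:ℝ)) * G = 1
    rw [Matrix.diagonal_one, Matrix.mul_one, hGtG]
  have hWadd : ∀ d d' : Fin p → ℝ, W d + W d' = W (fun i => d i + d' i) := by
    intro d d'
    show Gᵀ * Matrix.diagonal d * G + Gᵀ * Matrix.diagonal d' * G
        = Gᵀ * Matrix.diagonal (fun i => d i + d' i) * G
    have hdiag : Matrix.diagonal (fun i => d i + d' i) = Matrix.diagonal d + Matrix.diagonal d' := by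
      ext i j
      rcases eq_or_ne i j with rfl | h
      · simp
      · simp [Matrix.diagonal_apply_ne _ h]
    rw [hdiag, Matrix.mul_add, Matrix.add_mul]
  have hWsub : ∀ d d' : Fin p → ℝ, W d - W d' = W (fun i => d i - d' i) := by
    intro d d'
    have := hWadd (fun i => d i - d' i) d'
    rw [show (fun i => (d i - d' i) + d' i) = d by funext i; ring] at this
    rw [← this, add_sub_cancel_right]
  have hWsmul : ∀ (t : ℝ) (d : Fin p → ℝ), t • W d = W (fun i => t * d i) := by
    intro t d
    show t • (Gᵀ * Matrix.diagonal d * G) = Gᵀ * Matrix.diagonal (fun i => t * d i) * G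
    have hdiag : Matrix.diagonal (fun i => t * d i) = t • Matrix.diagonal d := by
      ext i j
      rcases eq_or_ne i j with rfl | h
      · simp
      · simp [Matrix.diagonal_apply_ne _ h]
    rw [hdiag, Matrix.mul_smul, Matrix.smul_mul]
  have hWpsd : ∀ {d : Fin p → ℝ}, (∀ i, 0 ≤ d i) → (W d).PosSemidef :=
    fun hd => psd_GdG hd G
  have hWquad : ∀ (d : Fin p → ℝ) (x : Fin m → ℝ),
      x ⬝ᵥ ((W d) *ᵥ x) = ∑ i, d i * ((G *ᵥ x) i)^2 :=
    fun d x => quad_diag d G x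
  -- scalar quantities
  set im1 : Fin p := ⟨m - 1, by omega⟩ with him1
  set im : Fin p := ⟨m, hmp⟩ with him
  have hlm' : lam im1 ≠ 0 := hlm
  set a : ℝ := lam im1 * lam im1 with ha_def
  set b : ℝ := lam im * lam im with hb_def
  have ha : 0 < a := by
    rcases lt_or_gt_of_ne hlm' with h | h
    · nlinarith
    · nlinarith
  have hord' : |lam im| ≤ |lam im1| := by
    apply hord
    rw [Fin.le_def]
    simp [him1, him]
  have hb_le_a : b ≤ a := by
    have := mul_self_le_mul_self (abs_nonneg _) hord'
    rwa [abs_mul_abs_self, abs_mul_abs_self] at this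
  have hb_eq : b = γ^2 * a := by
    rw [hγ, sq_abs, ha_def, hb_def, div_pow]
    field_simp
  set sθ : ℝ := sinTheta2 P Qprev with hsθ
  set D : ℝ := 1 - (1 - γ^2) * sθ^2 with hD_def
  -- pointwise spectral inequalities
  have hi_lt : ∀ i : Fin p, (i:ℕ) < m → a ≤ lam i * lam i := by
    intro i hi
    have hle : i ≤ im1 := by rw [Fin.le_def]; simp [him1]; omega
    have h := hord i im1 hle
    have := mul_self_le_mul_self (abs_nonneg _) h
    rwa [abs_mul_abs_self, abs_mul_abs_self] at this
  have hi_ge : ∀ i : Fin p, ¬((i:ℕ) < m) → lam i * lam i ≤ b := by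
    intro i hi
    have hle : im ≤ i := by rw [Fin.le_def]; simp [him]; omega
    have h := hord im i hle
    have := mul_self_le_mul_self (abs_nonneg _) h
    rwa [abs_mul_abs_self, abs_mul_abs_self] at this
  -- the matrices
  set dM : Fin p → ℝ := fun i => lam i * lam i with hdM
  set dN : Fin p → ℝ := fun i => lam i * e i * lam i with hdN
  set M : Matrix (Fin m) (Fin m) ℝ := W dM with hM
  set N : Matrix (Fin m) (Fin m) ℝ := W dN with hN
  set T : Matrix (Fin m) (Fin m) ℝ := W (fun i => dM i - dN i) with hT
  set K : Matrix (Fin m) (Fin m) ℝ := W (fun i => a * e i) with hK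
  set S : Matrix (Fin m) (Fin m) ℝ := W (fun i => 1 - e i) with hS
  set M₀ : Matrix (Fin m) (Fin m) ℝ := W (fun i => a * e i + (dM i - dN i)) with hM0
  set M₁ : Matrix (Fin m) (Fin m) ℝ := W (fun i => a * e i + b * (1 - e i)) with hM1
  set T₁ : Matrix (Fin m) (Fin m) ℝ := W (fun i => b * (1 - e i)) with hT1
  have he01 : ∀ i : Fin p, e i = 0 ∨ e i = 1 := by
    intro i; rw [he]; by_cases h : (i:ℕ) < m <;> simp [h]
  -- positive semidefiniteness of the pieces
  have hTpsd : T.PosSemidef := by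
    apply hWpsd
    intro i
    show (0:ℝ) ≤ dM i - dN i
    simp only [hdM, hdN]
    rcases he01 i with h | h <;> rw [h] <;> ring_nf
    · positivity
    · exact le_refl 0
  have hKpsd : K.PosSemidef := by
    apply hWpsd
    intro i
    show (0:ℝ) ≤ a * e i
    rcases he01 i with h | h <;> rw [h]
    · simp
    · simpa using ha.le
  have hSpsd0 : ∀ i : Fin p, 0 ≤ 1 - e i := by
    intro i; rcases he01 i with h | h <;> rw [h] <;> norm_num
  have hSpsd : S.PosSemidef := hWpsd hSpsd0
  have hT1psd : T₁.PosSemidef := by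
    apply hWpsd
    intro i
    show (0:ℝ) ≤ b * (1 - e i)
    have hbnn : (0:ℝ) ≤ b := hb_def ▸ mul_self_nonneg _
    rcases he01 i with h | h <;> rw [h]
    · linarith
    · simp
  have hM0psd : M₀.PosSemidef := by
    apply hWpsd
    intro i
    show (0:ℝ) ≤ a * e i + (dM i - dN i)
    simp only [hdM, hdN]
    rcases he01 i with h | h <;> rw [h] <;>
      simp only [mul_zero, zero_mul, mul_one, one_mul, zero_add, add_zero, sub_zero, sub_self]
    · exact mul_self_nonneg _
    · exact ha.le
  -- M = Rtᵀ Rt and PosDef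
  have hAsymT : Abarᵀ = Abar := hAsym
  have hAA : Abar * Abar = V * Matrix.diagonal dM * Vᵀ := by
    rw [hB, hdd, hdM]
  have hM_eq : M = Rtᵀ * Rt := by
    have h1 : Rtᵀ * Rt = (Qt * Rt)ᵀ * (Qt * Rt) := by
      rw [Matrix.transpose_mul]
      calc Rtᵀ * Rt = Rtᵀ * 1 * Rt := by rw [Matrix.mul_one]
        _ = Rtᵀ * (Qtᵀ * Qt) * Rt := by rw [hQt]
        _ = Rtᵀ * Qtᵀ * (Qt * Rt) := by simp only [Matrix.mul_assoc]
    have h2 : Qprevᵀ * Abar * (Abar * Qprev) = W dM := by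
      calc Qprevᵀ * Abar * (Abar * Qprev)
          = Qprevᵀ * (Abar * Abar) * Qprev := by simp only [Matrix.mul_assoc]
        _ = Qprevᵀ * (V * Matrix.diagonal dM * Vᵀ) * Qprev := by rw [hAA]
        _ = W dM := hWQ dM
    rw [hM, h1, hQR, Matrix.transpose_mul, hAsymT, h2]
  have hMpd : M.PosDef := by
    refine Matrix.PosDef.of_dotProduct_mulVec_pos (hWpsd (fun i => by rw [hdM]; exact mul_self_nonneg _)).1 fun x hx => ?_
    show 0 < x ⬝ᵥ (M *ᵥ x)
    rw [hM_eq, quad_self]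
    have hRx : Rt *ᵥ x ≠ 0 := by
      intro h0
      apply hx
      have : Rt⁻¹ *ᵥ (Rt *ᵥ x) = x := by
        rw [Matrix.mulVec_mulVec, Matrix.nonsing_inv_mul _ hRinv, Matrix.one_mulVec]
      rw [h0, Matrix.mulVec_zero] at this
      exact this.symm
    simpa using dotProduct_self_star_pos_iff (v := Rt *ᵥ x) |>.mpr hRx
  have hMdet : IsUnit M.det := hMpd.det_pos.ne'.isUnit
  have hMMinv : M * M⁻¹ = 1 := Matrix.mul_nonsing_inv _ hMdet
  -- M₀ is PosDef
  have h0p : 0 < p := by omega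
  set L : ℝ := lam ⟨0, h0p⟩ * lam ⟨0, h0p⟩ with hLdef
  have hLnn : 0 ≤ L := mul_self_nonneg _
  have hLi : ∀ i : Fin p, lam i * lam i ≤ L := by
    intro i
    have hle : (⟨0, h0p⟩ : Fin p) ≤ i := by rw [Fin.le_def]; simp
    have h := hord _ i hle
    have := mul_self_le_mul_self (abs_nonneg _) h
    rwa [abs_mul_abs_self, abs_mul_abs_self] at this
  have hM0pd : M₀.PosDef := by
    refine Matrix.PosDef.of_dotProduct_mulVec_pos hM0psd.1 fun x hx => ?_
    show 0 < x ⬝ᵥ (M₀ *ᵥ x)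
    have h1 : 0 < x ⬝ᵥ (M *ᵥ x) := by simpa using hMpd.dotProduct_mulVec_pos hx
    have hCpos : 0 < (L + a) / a := div_pos (by linarith) ha
    have key : x ⬝ᵥ (M *ᵥ x) ≤ ((L + a) / a) * (x ⬝ᵥ (M₀ *ᵥ x)) := by
      rw [hM, hM0, hWquad, hWquad, Finset.mul_sum]
      apply Finset.sum_le_sum
      intro i _
      show dM i * (G *ᵥ x) i ^ 2 ≤ (L + a) / a * ((a * e i + (dM i - dN i)) * (G *ᵥ x) i ^ 2)
      simp only [hdM, hdN]
      set y := (G *ᵥ x) i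
      have hy : 0 ≤ y * y := mul_self_nonneg y
      rcases he01 i with h | h <;> rw [h]
      · -- e i = 0, so i ≥ m contributes lam i ^ 2 on both sides
        have hfac : (1:ℝ) ≤ (L + a) / a := by
          rw [le_div_iff₀ ha]; linarith
        have : 0 ≤ lam i * lam i * y^2 :=
          mul_nonneg (mul_self_nonneg _) (sq_nonneg _)
        nlinarith
      · -- e i = 1
        have h2 : lam i * lam i ≤ L := hLi i
        have h3 : ((L + a) / a) * a = L + a := by field_simp
        have : 0 ≤ y^2 := sq_nonneg y
        nlinarith
    by_contra hq0'
    push_neg at hq0'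
    have hle : (L + a) / a * (x ⬝ᵥ (M₀ *ᵥ x)) ≤ 0 :=
      mul_nonpos_iff.mpr (Or.inl ⟨hCpos.le, hq0'⟩)
    linarith
  have hM0det : IsUnit M₀.det := hM0pd.det_pos.ne'.isUnit
  -- Loewner comparisons
  have hM0M : (M - M₀).PosSemidef := by
    rw [hM, hM0, hWsub]
    apply hWpsd
    intro i
    show (0:ℝ) ≤ dM i - (a * e i + (dM i - dN i))
    simp only [hdM, hdN]
    rcases he01 i with h | h <;> rw [h]
    · simp
    · have h2 := hi_lt i (by by_contra hcon; rw [he] at h; simp [hcon] at h)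
      simp only [mul_zero, zero_mul, mul_one, one_mul, zero_add, add_zero, sub_zero, sub_self]
      linarith
  have hM1M0 : (M₁ - M₀).PosSemidef := by
    rw [hM1, hM0, hWsub]
    apply hWpsd
    intro i
    show (0:ℝ) ≤ a * e i + b * (1 - e i) - (a * e i + (dM i - dN i))
    simp only [hdM, hdN]
    rcases he01 i with h | h <;> rw [h]
    · have h2 := hi_ge i (by by_contra hcon; rw [he] at h; simp [hcon] at h)
      simp only [mul_zero, zero_mul, mul_one, one_mul, zero_add, add_zero, sub_zero, sub_self]
      linarith
    · simp
  -- S and the spectral norm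
  set C : Matrix (Fin p) (Fin m) ℝ := (1 - P * Pᵀ) * Qprev with hC
  have hsθC : sθ = specNorm C := by rw [hsθ, hC]; rfl
  have hPiPi : (V * Matrix.diagonal e * Vᵀ) * (V * Matrix.diagonal e * Vᵀ)
      = V * Matrix.diagonal e * Vᵀ := by
    have hee : (fun i : Fin p => e i * e i) = e := by
      funext i
      rcases he01 i with h | h <;> rw [h] <;> norm_num
    rw [hdd, hee]
  have hWe : Qprevᵀ * (P * Pᵀ) * Qprev = W e := by rw [hPi, hWQ]
  have hSe : S = 1 - W e := by
    rw [hS, ← hW1, hWsub]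
  have hPt : (1 - P * Pᵀ)ᵀ = 1 - P * Pᵀ := by
    rw [Matrix.transpose_sub, Matrix.transpose_one, Matrix.transpose_mul,
      Matrix.transpose_transpose]
  have hidem : (1 - P * Pᵀ) * (1 - P * Pᵀ) = 1 - P * Pᵀ := by
    rw [Matrix.mul_sub, Matrix.sub_mul, Matrix.sub_mul, Matrix.one_mul, Matrix.mul_one,
      hPi, hPiPi]
    simp only [Matrix.one_mul, Matrix.mul_one]
    abel
  have key : Qprevᵀ * ((1 - P * Pᵀ) * Qprev) = 1 - W e := by
    rw [Matrix.sub_mul, Matrix.one_mul, Matrix.mul_sub, hQprev, ← hWe]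
    congr 1
    simp only [Matrix.mul_assoc]
  have hS_CC : S = Cᵀ * C := by
    have hfull : Cᵀ * C = Qprevᵀ * ((1 - P * Pᵀ) * Qprev) := by
      rw [hC, Matrix.transpose_mul, hPt]
      calc Qprevᵀ * (1 - P * Pᵀ) * ((1 - P * Pᵀ) * Qprev)
          = Qprevᵀ * ((1 - P * Pᵀ) * (1 - P * Pᵀ) * Qprev) := by
            simp only [Matrix.mul_assoc]
        _ = Qprevᵀ * ((1 - P * Pᵀ) * Qprev) := by rw [hidem]
    rw [hfull, key, hSe]
  -- spectral bound on S
  have hspec_S : ∀ x : Fin m → ℝ, x ⬝ᵥ (S *ᵥ x) ≤ sθ^2 * (x ⬝ᵥ x) := by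
    intro x
    rw [hS_CC, hsθC]
    exact specNorm_quad C x
  have hspecPSD : ((sθ^2) • (1 : Matrix (Fin m) (Fin m) ℝ) - S).PosSemidef := by
    refine Matrix.PosSemidef.of_dotProduct_mulVec_nonneg ?_ ?_
    · show _ᴴ = _
      rw [Matrix.conjTranspose_sub, Matrix.conjTranspose_smul, Matrix.conjTranspose_one]
      rw [hSpsd.1]
      simp
    · intro x
      show 0 ≤ x ⬝ᵥ ((sθ^2 • 1 - S) *ᵥ x)
      rw [Matrix.sub_mulVec, dotProduct_sub, Matrix.smul_mulVec, Matrix.one_mulVec,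
        dotProduct_smul]
      have := hspec_S x
      simp only [smul_eq_mul]
      linarith
  have hRW : (a - b) • ((sθ^2) • (1 : Matrix (Fin m) (Fin m) ℝ) - S)
      = W (fun i => (a - b) * (sθ^2 * 1 - (1 - e i))) := by
    rw [hS, ← hW1, hWsmul, hWsub, hWsmul]
  have hLW : M₁ - (a * D) • (1 : Matrix (Fin m) (Fin m) ℝ)
      = W (fun i => (a * e i + b * (1 - e i)) - a * D * 1) := by
    rw [hM1, ← hW1, hWsmul, hWsub]
  have hM1split : M₁ - (a * D) • (1 : Matrix (Fin m) (Fin m) ℝ)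
      = (a - b) • ((sθ^2) • (1 : Matrix (Fin m) (Fin m) ℝ) - S) := by
    have hfe : (fun i : Fin p => (a * e i + b * (1 - e i)) - a * D * 1)
        = (fun i : Fin p => (a - b) * (sθ^2 * 1 - (1 - e i))) := by
      funext i
      rcases he01 i with h | h <;> rw [h, hb_eq, hD_def] <;> ring
    rw [hLW, hRW, hfe]
  have hab : 0 ≤ a - b := by linarith
  have hdiff1 : (M₁ - (a * D) • (1 : Matrix (Fin m) (Fin m) ℝ)).PosSemidef := by
    rw [hM1split]; exact psd_smul' hab hspecPSD
  have haD : 0 < a * D := mul_pos ha hden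
  have hM1pd : M₁.PosDef := posdef_of_psd_diff (posdef_smul_one haD) hdiff1
  have hM1det : IsUnit M₁.det := hM1pd.det_pos.ne'.isUnit
  -- Qt in terms of Qprev
  have hQtB : Qt = Abar * Qprev * Rt⁻¹ := by
    have h : Qt * Rt * Rt⁻¹ = Abar * Qprev * Rt⁻¹ := by rw [hQR]
    rwa [Matrix.mul_assoc, Matrix.mul_nonsing_inv _ hRinv, Matrix.mul_one] at h
  have hMinv : M⁻¹ = Rt⁻¹ * (Rt⁻¹)ᵀ := by
    rw [hM_eq, Matrix.mul_inv_rev, Matrix.transpose_nonsing_inv]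
  have hBPB : Abar * (P * Pᵀ) * Abar = V * Matrix.diagonal dN * Vᵀ := by
    rw [hB, hPi, hdd, hdd]
  have hfrobt : frobNorm (Pᵀ * Qt) ^ 2 = (N * M⁻¹).trace := by
    rw [frobNorm_sq]
    have h1 : (Pᵀ * Qt)ᵀ * (Pᵀ * Qt)
        = Rt⁻¹ᵀ * (Qprevᵀ * (Abar * (P * Pᵀ) * Abar) * Qprev) * Rt⁻¹ := by
      rw [hQtB]
      simp only [Matrix.transpose_mul, Matrix.transpose_transpose, hAsymT, Matrix.mul_assoc]
    rw [h1, hBPB, hWQ]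
    rw [Matrix.mul_assoc, Matrix.trace_mul_comm, Matrix.mul_assoc, ← hMinv, hN]
  have hfrobp : frobNorm (Pᵀ * Qprev) ^ 2 = (W e).trace := by
    rw [frobNorm_sq, ← hWe]
    congr 1
    simp only [Matrix.transpose_mul, Matrix.transpose_transpose, Matrix.mul_assoc]
  have htrS : S.trace = (m:ℝ) - frobNorm (Pᵀ * Qprev) ^ 2 := by
    rw [hSe, Matrix.trace_sub, Matrix.trace_one, hfrobp]
    simp
  -- trace identities and the chain
  have hMM : (M * M⁻¹).trace = (m:ℝ) := by
    rw [hMMinv, Matrix.trace_one]; simp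
  have hNT : N + T = M := by
    have hfe : (fun i : Fin p => dN i + (dM i - dN i)) = dM := by
      funext i
      ring
    rw [hN, hT, hM, hWadd, hfe]
  have hTM : (T * M⁻¹).trace = (m:ℝ) - frobNorm (Pᵀ * Qt) ^ 2 := by
    have h := congrArg (fun X => (X * M⁻¹).trace) hNT
    simp only [Matrix.add_mul, Matrix.trace_add] at h
    rw [hMM] at h
    rw [hfrobt]
    linarith
  have hKT0 : K + T = M₀ := by rw [hK, hT, hM0, hWadd]
  have hKT1 : K + T₁ = M₁ := by rw [hK, hT1, hM1, hWadd]
  have hM0inv : M₀ * M₀⁻¹ = 1 := Matrix.mul_nonsing_inv _ hM0det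
  have hM1inv : M₁ * M₁⁻¹ = 1 := Matrix.mul_nonsing_inv _ hM1det
  have htr0 : (K * M₀⁻¹).trace + (T * M₀⁻¹).trace = (m:ℝ) := by
    have h := congrArg (fun X => (X * M₀⁻¹).trace) hKT0
    simp only [Matrix.add_mul, Matrix.trace_add] at h
    rw [hM0inv, Matrix.trace_one] at h
    simpa using h
  have htr1 : (K * M₁⁻¹).trace + (T₁ * M₁⁻¹).trace = (m:ℝ) := by
    have h := congrArg (fun X => (X * M₁⁻¹).trace) hKT1
    simp only [Matrix.add_mul, Matrix.trace_add] at h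
    rw [hM1inv, Matrix.trace_one] at h
    simpa using h
  have step1 : (T * M⁻¹).trace ≤ (T * M₀⁻¹).trace :=
    trace_mul_mono hTpsd (psd_inv_antitone hM0pd hMpd hM0M)
  have step2 : (K * M₁⁻¹).trace ≤ (K * M₀⁻¹).trace :=
    trace_mul_mono hKpsd (psd_inv_antitone hM0pd hM1pd hM1M0)
  have step3 : (T * M₀⁻¹).trace ≤ (T₁ * M₁⁻¹).trace := by linarith
  have hsmulinv : ((a * D) • (1 : Matrix (Fin m) (Fin m) ℝ))⁻¹ = (a * D)⁻¹ • 1 :=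
    smul_one_inv haD.ne'
  have hinvle : ((a * D)⁻¹ • (1 : Matrix (Fin m) (Fin m) ℝ) - M₁⁻¹).PosSemidef := by
    rw [← hsmulinv]
    exact psd_inv_antitone (posdef_smul_one haD) hM1pd hdiff1
  have step4 : (T₁ * M₁⁻¹).trace ≤ (T₁ * ((a * D)⁻¹ • 1)).trace :=
    trace_mul_mono hT1psd hinvle
  have hT1S : T₁ = b • S := by rw [hT1, hS, hWsmul]
  have htr4 : (T₁ * ((a * D)⁻¹ • (1 : Matrix (Fin m) (Fin m) ℝ))).trace
      = (a * D)⁻¹ * (b * S.trace) := by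
    rw [Matrix.mul_smul, Matrix.mul_one, Matrix.trace_smul, hT1S, Matrix.trace_smul]
    simp [smul_eq_mul]
  have hfinal1 : (m:ℝ) - frobNorm (Pᵀ * Qt) ^ 2 ≤ (a * D)⁻¹ * (b * S.trace) := by
    rw [← hTM]
    calc (T * M⁻¹).trace ≤ (T₁ * M₁⁻¹).trace := le_trans step1 step3
      _ ≤ (T₁ * ((a * D)⁻¹ • 1)).trace := step4
      _ = (a * D)⁻¹ * (b * S.trace) := htr4
  rw [htrS] at hfinal1
  have hgoal1 : (a * D)⁻¹ * (b * ((m:ℝ) - frobNorm (Pᵀ * Qprev) ^ 2))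
      = γ^2 * ((m:ℝ) - frobNorm (Pᵀ * Qprev) ^ 2) / D := by
    rw [hb_eq]
    field_simp
  rw [hgoal1] at hfinal1
  have hm0 : (0:ℝ) < m := by exact_mod_cast hm1
  have hextra : 0 ≤ (((m:ℝ) - c) / m) * frobNorm (Pᵀ * Qprev) ^ 2 :=
    mul_nonneg (div_nonneg (by linarith) hm0.le) (sq_nonneg _)
  rw [le_div_iff₀ hden]
  have h2 : ((m:ℝ) - frobNorm (Pᵀ * Qt) ^ 2) * D
      ≤ γ^2 * ((m:ℝ) - frobNorm (Pᵀ * Qprev) ^ 2) := by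
    rw [← le_div_iff₀ hden]
    exact hfinal1
  clear_value D
  linarith [h2, hextra]
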